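/- arXiv:1010.3446 — 4 statements merged into one kernel-verified Lean document; each statement's English description precedes it below -/
import Mathlib

section
/- Let D be a directed set admitting a cofinal sequence, T a Hausdorff (T2) topological space, and f : D → T a net. If for every cofinal sequence (x_n) in D the sequence (f(x_n)) converges (to some limit possibly depending on the sequence), then there exists ξ ∈ T such that the net f converges to ξ and every sequence (f(x_n)) over a cofinal sequence (x_n) converges to ξ. -/
def IsCofinalSeq {D : Type*} [Preorder D] (z : ℕ → D) : Prop :=
  ∀ α : D, ∃ N : ℕ, ∀ n ≥ N, α ≤ z n

private lemma interleave_cofinal {D : Type*} [Preorder D] {x z : ℕ → D}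
    (hx : IsCofinalSeq x) (hz : IsCofinalSeq z) :
    IsCofinalSeq (fun n => if Even n then x (n / 2) else z (n / 2)) := by
  intro α
  obtain ⟨N1, h1⟩ := hx α
  obtain ⟨N2, h2⟩ := hz α
  refine ⟨2 * max N1 N2, fun n hn => ?_⟩
  have hhalf : max N1 N2 ≤ n / 2 := Nat.le_div_iff_mul_le (by norm_num) |>.2 (by omega)
  by_cases h : Even n
  · simpa [h] using h1 _ (le_trans (le_max_left _ _) hhalf)
  · simpa [h] using h2 _ (le_trans (le_max_right _ _) hhalf)

theorem net_limit_exists_of_all_cofinal_seq_converge {D : Type*} [Nonempty D] [Preorder D]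
    [IsDirected D (· ≤ ·)] {T : Type*} [TopologicalSpace T] [T2Space T]
    (hD : ∃ z : ℕ → D, IsCofinalSeq z) (f : D → T)
    (hconv : ∀ x : ℕ → D, IsCofinalSeq x →
      ∃ L : T, Filter.Tendsto (fun n => f (x n)) Filter.atTop (nhds L)) :
    ∃ ξ : T, Filter.Tendsto f Filter.atTop (nhds ξ) ∧
      ∀ x : ℕ → D, IsCofinalSeq x →
        Filter.Tendsto (fun n => f (x n)) Filter.atTop (nhds ξ) := by
  obtain ⟨z, hz⟩ := hD
  obtain ⟨L, hL⟩ := hconv z hz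
  -- every cofinal sequence converges to L
  have key : ∀ x : ℕ → D, IsCofinalSeq x →
      Filter.Tendsto (fun n => f (x n)) Filter.atTop (nhds L) := by
    intro x hx
    obtain ⟨M, hM⟩ := hconv x hx
    obtain ⟨W, hW⟩ := hconv _ (interleave_cofinal hx hz)
    have hev : Filter.Tendsto (fun n : ℕ => 2 * n) Filter.atTop Filter.atTop :=
      StrictMono.tendsto_atTop (fun a b h => by omega)
    have hod : Filter.Tendsto (fun n : ℕ => 2 * n + 1) Filter.atTop Filter.atTop :=
      StrictMono.tendsto_atTop (fun a b h => by omega)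
    have hxe : Filter.Tendsto (fun n => f (x n)) Filter.atTop (nhds W) := by
      have h := hW.comp hev
      have heq : ((fun n => f (if Even n then x (n / 2) else z (n / 2))) ∘ fun n : ℕ => 2 * n)
          = fun n => f (x n) := by
        funext n
        have he : Even (2 * n) := ⟨n, two_mul n⟩
        simp [Function.comp, he, Nat.mul_div_cancel_left]
      rwa [heq] at h
    have hzo : Filter.Tendsto (fun n => f (z n)) Filter.atTop (nhds W) := by
      have h := hW.comp hod
      have heq : ((fun n => f (if Even n then x (n / 2) else z (n / 2))) ∘ fun n : ℕ => 2 * n + 1)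
          = fun n => f (z n) := by
        funext n
        have ho : ¬ Even (2 * n + 1) := by simp [Nat.even_add_one, Nat.even_mul]
        have hd : (2 * n + 1) / 2 = n := by omega
        simp [Function.comp, ho, hd]
      rwa [heq] at h
    have : W = L := tendsto_nhds_unique hzo hL
    exact this ▸ hxe
  refine ⟨L, ?_, key⟩
  -- net convergence, by contradiction
  rw [Filter.tendsto_def]
  intro U hU
  by_contra hcon
  rw [← Filter.eventually_mem_set, Filter.eventually_atTop] at hcon
  push_neg at hcon
  choose y hy hfy using fun n => hcon (z n)
  have hycof : IsCofinalSeq y := by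
    intro α
    obtain ⟨N, hN⟩ := hz α
    exact ⟨N, fun n hn => le_trans (hN n hn) (hy n)⟩
  have hm := key y hycof hU
  rw [Filter.mem_map, Filter.mem_atTop_sets] at hm
  obtain ⟨N, hN⟩ := hm
  exact hfy N (hN N le_rfl)
end

section
/- Let D be a directed set with a nondecreasing cofinal sequence (z_n), T a Hausdorff topological space, and f : D → T a net. Suppose for every sequence (x_n) in D with z_n ≤ x_n for all n, the sequence (f(x_n)) converges in T. Then the net f : D → T converges (with respect to the atTop filter on D). -/
theorem net_converges_of_regular_seqs_converge {D : Type*} [Nonempty D] [Preorder D]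
    [IsDirected D (· ≤ ·)] {T : Type*} [TopologicalSpace T] [T2Space T]
    (z : ℕ → D) (hz : IsCofinalSeq z) (hmono : ∀ n, z n ≤ z (n + 1))
    (f : D → T)
    (hconv : ∀ x : ℕ → D, (∀ n, z n ≤ x n) →
      ∃ L : T, Filter.Tendsto (fun n => f (x n)) Filter.atTop (nhds L)) :
    ∃ ξ : T, Filter.Tendsto f Filter.atTop (nhds ξ) := by
  have hzmono : Monotone z := monotone_nat_of_le_succ hmono
  obtain ⟨L, hL⟩ := hconv z (fun n => le_refl _)
  refine ⟨L, ?_⟩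
  by_contra hnot
  rw [Filter.Tendsto] at hnot
  have : ∃ U ∈ nhds L, ¬ ∀ᶠ a in Filter.atTop, f a ∈ U := by
    by_contra h
    push_neg at h
    exact hnot fun U hU => h U hU
  obtain ⟨U, hU, hnU⟩ := this
  rw [Filter.eventually_atTop] at hnU
  push_neg at hnU
  -- choose x n ≥ z n with f (x n) ∉ U
  choose x hx hxU using fun n => hnU (z n)
  -- interleave
  set w : ℕ → D := fun n => if n % 2 = 0 then z n else x n with hw
  have hwreg : ∀ n, z n ≤ w n := by
    intro n
    by_cases h : n % 2 = 0 <;> simp [hw, h, hx n]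
  obtain ⟨M, hM⟩ := hconv w hwreg
  have h2 : Filter.Tendsto (fun n : ℕ => 2 * n) Filter.atTop Filter.atTop :=
    Filter.tendsto_atTop_atTop.mpr fun b => ⟨b, fun a ha => by omega⟩
  have h21 : Filter.Tendsto (fun n : ℕ => 2 * n + 1) Filter.atTop Filter.atTop :=
    Filter.tendsto_atTop_atTop.mpr fun b => ⟨b, fun a ha => by omega⟩
  -- even subsequence of w equals z at even indices
  have heven : Filter.Tendsto (fun n : ℕ => f (w (2 * n))) Filter.atTop (nhds L) := by
    have : (fun n : ℕ => f (w (2 * n))) = fun n : ℕ => f (z (2 * n)) := by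
      funext n; simp [hw, Nat.mul_mod_right]
    rw [this]
    exact hL.comp h2
  have heven' : Filter.Tendsto (fun n : ℕ => f (w (2 * n))) Filter.atTop (nhds M) :=
    hM.comp h2
  have hLM : L = M := tendsto_nhds_unique heven heven'
  have hodd : Filter.Tendsto (fun n : ℕ => f (w (2 * n + 1))) Filter.atTop (nhds L) := by
    rw [hLM]; exact hM.comp h21
  have hev : ∀ᶠ n in Filter.atTop, f (w (2 * n + 1)) ∈ U := hodd.eventually_mem hU
  obtain ⟨n, hn⟩ := hev.exists
  have : w (2 * n + 1) = x (2 * n + 1) := by simp [hw, Nat.mul_add_mod]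
  rw [this] at hn
  exact hxU (2 * n + 1) hn
end

section
/- Let D be a directed set with a nondecreasing cofinal sequence (z_n), and let f : D → ℝ be a net. Suppose that for every sequence (x_n) with z_n ≤ x_n for all n, the sequence (f(x_n)) is a Cauchy sequence in ℝ. Then the net f is Cauchy: for every ε > 0 there exists α ∈ D such that |f(β) − f(γ)| < ε for all β, γ ≥ α. -/
theorem net_cauchy_of_regular_seqs_cauchy {D : Type*} [Nonempty D] [Preorder D]
    [IsDirected D (· ≤ ·)] (z : ℕ → D) (hmono : ∀ n, z n ≤ z (n + 1))
    (hz : ∀ α : D, ∃ N : ℕ, ∀ n ≥ N, α ≤ z n) (f : D → ℝ)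
    (hcauchy : ∀ x : ℕ → D, (∀ n, z n ≤ x n) →
      ∀ ε > 0, ∃ N : ℕ, ∀ m ≥ N, ∀ n ≥ N, |f (x m) - f (x n)| < ε) :
    ∀ ε > 0, ∃ α : D, ∀ β γ : D, α ≤ β → α ≤ γ → |f β - f γ| < ε := by
  by_contra h
  push_neg at h
  obtain ⟨ε, hε, hbad⟩ := h
  have hm : Monotone z := monotone_nat_of_le_succ hmono
  choose β γ hβ hγ hsep using fun n => hbad (z (2 * n + 1))
  set x : ℕ → D := fun k => if Even k then β (k / 2) else γ (k / 2) with hxdef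
  have hx : ∀ k, z k ≤ x k := by
    intro k
    by_cases hk : Even k
    · have hk2 : k = 2 * (k / 2) := (Nat.two_mul_div_two_of_even hk).symm
      simp only [hxdef, if_pos hk]
      calc z k ≤ z (2 * (k / 2) + 1) := hm (show k ≤ 2 * (k / 2) + 1 by omega)
        _ ≤ β (k / 2) := hβ _
    · have hk2 : k = 2 * (k / 2) + 1 := by
        rcases Nat.even_or_odd k with h | h
        · exact absurd h hk
        · obtain ⟨m, hm'⟩ := h; omega
      simp only [hxdef, if_neg hk]
      calc z k ≤ z (2 * (k / 2) + 1) := hm (show k ≤ 2 * (k / 2) + 1 by omega)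
        _ ≤ γ (k / 2) := hγ _
  obtain ⟨N, hN⟩ := hcauchy x hx ε hε
  have h1 : x (2 * N) = β N := by
    simp only [hxdef]
    rw [if_pos (even_two_mul N)]
    congr 1; omega
  have h2 : x (2 * N + 1) = γ N := by
    simp only [hxdef]
    rw [if_neg (by simp [Nat.even_add_one, Nat.even_mul])]
    congr 1; omega
  have := hN (2 * N) (by omega) (2 * N + 1) (by omega)
  rw [h1, h2] at this
  exact absurd this (not_lt.mpr (hsep N))
end

section
/- Let D be a directed set, (z_n) a nondecreasing cofinal sequence in D, and T a metric space. Let f : D → T be a net such that for every sequence (x_n) with z_n ≤ x_n for all n, the sequence (f(x_n)) converges in T. Then f converges to the same limit as the sequence (f(z_n)): if ζ = lim f(z_n), then the net f converges to ζ. -/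
theorem net_tendsto_of_regular_seqs_converge {D : Type*} [Nonempty D] [Preorder D]
    [IsDirected D (· ≤ ·)] {T : Type*} [MetricSpace T]
    (z : ℕ → D) (hmono : ∀ n, z n ≤ z (n + 1))
    (hz : ∀ α : D, ∃ N : ℕ, ∀ n ≥ N, α ≤ z n)
    (f : D → T)
    (hconv : ∀ x : ℕ → D, (∀ n, z n ≤ x n) →
      ∃ L : T, Filter.Tendsto (fun n => f (x n)) Filter.atTop (nhds L))
    (ζ : T) (hζ : Filter.Tendsto (fun n => f (z n)) Filter.atTop (nhds ζ)) :
    Filter.Tendsto f Filter.atTop (nhds ζ) := by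
  rw [Metric.tendsto_nhds]
  intro ε hε
  by_contra hcon
  rw [Filter.not_eventually, Filter.frequently_atTop] at hcon
  push_neg at hcon
  choose g hg1 hg2 using hcon
  set w : ℕ → D := fun n => if Even n then z n else g (z n) with hwdef
  have hw : ∀ n, z n ≤ w n := by
    intro n
    by_cases h : Even n <;> simp [hwdef, h, hg1]
  obtain ⟨L, hL⟩ := hconv w hw
  have h2 : Filter.Tendsto (fun n => 2 * n) Filter.atTop Filter.atTop :=
    Filter.tendsto_atTop_atTop.mpr fun b => ⟨b, fun a ha => by omega⟩
  have h2o : Filter.Tendsto (fun n => 2 * n + 1) Filter.atTop Filter.atTop :=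
    Filter.tendsto_atTop_atTop.mpr fun b => ⟨b, fun a ha => by omega⟩
  have he : Filter.Tendsto (fun n => f (w (2 * n))) Filter.atTop (nhds ζ) := by
    have heq : (fun n => f (w (2 * n))) = fun n => f (z (2 * n)) := by
      funext n
      simp [hwdef, even_two_mul n]
    rw [heq]
    exact hζ.comp h2
  have hLζ : L = ζ := tendsto_nhds_unique (hL.comp h2) he
  have ho : Filter.Tendsto (fun n => f (w (2 * n + 1))) Filter.atTop (nhds ζ) := by
    rw [← hLζ]; exact hL.comp h2o
  rw [Metric.tendsto_nhds] at ho
  obtain ⟨n, hn⟩ := (ho ε hε).exists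
  have : ¬ Even (2 * n + 1) := by simp [Nat.even_add_one, even_two_mul]
  rw [show w (2 * n + 1) = g (z (2 * n + 1)) by simp [hwdef, this]] at hn
  exact absurd hn (not_lt.mpr (hg2 (z (2 * n + 1))))
end
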